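/- Let (x_n) be the Tripell sequence x_0 = 0, x_1 = 1, x_2 = 2, x_n = 2x_{n-1} + x_{n-2} + x_{n-3}, and let γ be the real root of x³ - 2x² - x - 1 (γ ≈ 2.55). Then γ^{n-2} ≤ x_n ≤ γ^{n-1} for all n ≥ 1. -/

import Mathlib

def tripell : ℕ → ℤ
  | 0 => 0
  | 1 => 1
  | 2 => 2
  | n + 3 => 2 * tripell (n + 2) + tripell (n + 1) + tripell n

/-!
Both `n ↦ γ ^ (n - 2)` and `n ↦ γ ^ (n - 1)` satisfy the Tripell recurrence, because `γ` is a root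
of its characteristic polynomial. Since the recurrence has nonnegative coefficients, an inequality
between two of its solutions propagates from three consecutive indices to all later ones, so it
suffices to check `γ⁻¹ ≤ 1 ≤ 2 ≤ γ ≤ 5 ≤ γ²`, which follows from `2 < γ < 3`.
-/

theorem le_of_linearRecurrence {a b c : ℝ} (ha : 0 ≤ a) (hb : 0 ≤ b) (hc : 0 ≤ c) {u v : ℕ → ℝ}
    (hu : ∀ n, u (n + 3) = a * u (n + 2) + b * u (n + 1) + c * u n)
    (hv : ∀ n, v (n + 3) = a * v (n + 2) + b * v (n + 1) + c * v n)
    (h0 : u 0 ≤ v 0) (h1 : u 1 ≤ v 1) (h2 : u 2 ≤ v 2) : ∀ n, u n ≤ v n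
  | 0 => h0
  | 1 => h1
  | 2 => h2
  | n + 3 => by
    have ih₀ := le_of_linearRecurrence ha hb hc hu hv h0 h1 h2 n
    have ih₁ := le_of_linearRecurrence ha hb hc hu hv h0 h1 h2 (n + 1)
    have ih₂ := le_of_linearRecurrence ha hb hc hu hv h0 h1 h2 (n + 2)
    rw [hu, hv]
    gcongr

theorem mul_pow_linearRecurrence {a b c γ : ℝ} (hγ : γ ^ 3 = a * γ ^ 2 + b * γ + c) (C : ℝ)
    (n : ℕ) :
    C * γ ^ (n + 3) = a * (C * γ ^ (n + 2)) + b * (C * γ ^ (n + 1)) + c * (C * γ ^ n) := by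
  linear_combination C * γ ^ n * hγ

theorem tripell_add_three (n : ℕ) :
    (tripell (n + 3) : ℝ) = 2 * tripell (n + 2) + 1 * tripell (n + 1) + 1 * tripell n := by
  simp only [tripell]
  push_cast
  ring

theorem two_lt_and_lt_three_of_tripell_root {γ : ℝ} (hroot : γ ^ 3 - 2 * γ ^ 2 - γ - 1 = 0) :
    2 < γ ∧ γ < 3 := by
  constructor <;> nlinarith [sq_nonneg γ, sq_nonneg (γ - 1), sq_nonneg (γ + 1), sq_nonneg (γ - 3)]

theorem stmt_18_general (γ : ℝ) (hroot : γ ^ 3 - 2 * γ ^ 2 - γ - 1 = 0) :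
    ∀ n : ℕ, 1 ≤ n → γ ^ ((n : ℤ) - 2) ≤ (tripell n : ℝ) ∧ (tripell n : ℝ) ≤ γ ^ ((n : ℤ) - 1) := by
  obtain ⟨hγ2, hγ3⟩ := two_lt_and_lt_three_of_tripell_root hroot
  have hchar : γ ^ 3 = 2 * γ ^ 2 + 1 * γ + 1 := by linear_combination hroot
  have hinv : γ⁻¹ ≤ 1 := inv_le_one_of_one_le₀ (by linarith)
  have hsq : 5 ≤ γ ^ 2 := by nlinarith
  have hγ0 : γ ≠ 0 := by positivity
  have lower := le_of_linearRecurrence (u := fun m => γ⁻¹ * γ ^ m) (v := fun m => tripell (m + 1))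
    zero_le_two zero_le_one zero_le_one (mul_pow_linearRecurrence hchar _)
    (fun m => tripell_add_three (m + 1)) (by simpa [tripell]) (by norm_num [tripell, inv_mul_cancel₀ hγ0])
    (by norm_num [tripell, pow_two, ← mul_assoc, inv_mul_cancel₀ hγ0]; linarith)
  have upper := le_of_linearRecurrence (u := fun m => tripell (m + 1)) (v := fun m => 1 * γ ^ m)
    zero_le_two zero_le_one zero_le_one (fun m => tripell_add_three (m + 1))
    (mul_pow_linearRecurrence hchar _) (by norm_num [tripell]) (by norm_num [tripell]; linarith)
    (by norm_num [tripell]; linarith)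
  rintro (_ | m) hm
  · omega
  push_cast
  rw [show (m : ℤ) + 1 - 2 = m - 1 by ring, add_sub_cancel_right, zpow_sub_one₀ hγ0,
    zpow_natCast, mul_comm]
  simpa using And.intro (lower m) (upper m)

theorem stmt_18 (γ : ℝ) (hroot : γ ^ 3 - 2 * γ ^ 2 - γ - 1 = 0) (hγ : 1 < γ) :
    ∀ n : ℕ, 1 ≤ n → γ ^ ((n : ℤ) - 2) ≤ (tripell n : ℝ) ∧ (tripell n : ℝ) ≤ γ ^ ((n : ℤ) - 1) :=
  stmt_18_general γ hroot
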